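/- arXiv:1210.2110 — 3 statements merged into one kernel-verified Lean document; each statement's English description precedes it below -/
import Mathlib

section
/- Let (Ω, V) be an affine resolvable (θ, ρ, α, λ)-BIBD (a resolvable BIBD with n = θ + ρ − 1 blocks) and set β = α²/θ. Let P¹ and P² be two distinct parallel classes of the resolution and let B be a block in P¹. Then P² contains exactly θ/α blocks, |B ∩ C| = β for every block C ∈ P², and B is the union over C ∈ P² of the sets B ∩ C; in particular B is β-recoverable from P². -/
/-!
Bose's variance argument. Fix a block `B` of one parallel class and let `m = θ / α` be the
number of blocks per class. Counting the points of `B`, and the ordered pairs of points of `B`,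
over the blocks `C` outside the class of `B` gives `Σ |B ∩ C| = α (ρ - 1)` and
`Σ |B ∩ C|² = α (ρ - 1) + α (α - 1) (λ - 1)`, over `(ρ - 1) m` blocks. The affine condition
`n = θ + ρ - 1` together with `ρ (α - 1) = λ (θ - 1)` forces `α - 1 = λ (m - 1)`, and then
`Σ (m |B ∩ C| - α)² = 0`: every such intersection has exactly `α / m = α² / θ` points.
-/

open Finset

section Design

variable {Ω ι : Type*} [DecidableEq Ω] [Fintype ι] (V : ι → Finset Ω)

theorem sum_card_inter_eq_card_mul {ρ : ℕ} (hρ : ∀ x, #{i | x ∈ V i} = ρ) (A : Finset Ω) :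
    ∑ i, #(A ∩ V i) = #A * ρ := by
  have hcount := sum_card_bipartiteAbove_eq_sum_card_bipartiteBelow (s := univ) (t := A)
    (fun i x => x ∈ V i)
  simpa only [bipartiteAbove, bipartiteBelow, filter_mem_eq_inter, hρ, sum_const,
    smul_eq_mul] using hcount

theorem sum_card_inter_sq {ρ lam : ℕ} (hρ : ∀ x, #{i | x ∈ V i} = ρ)
    (hlam : ∀ x y, x ≠ y → #{i | x ∈ V i ∧ y ∈ V i} = lam) (A : Finset Ω) :
    ∑ i, #(A ∩ V i) ^ 2 = #A * ρ + #A * (#A - 1) * lam := by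
  have hcount := sum_card_bipartiteAbove_eq_sum_card_bipartiteBelow (s := univ) (t := A ×ˢ A)
    (fun i p => p.1 ∈ V i ∧ p.2 ∈ V i)
  have habove : ∀ i, (A ×ˢ A).bipartiteAbove (fun i p => p.1 ∈ V i ∧ p.2 ∈ V i) i
      = (A ∩ V i) ×ˢ (A ∩ V i) := fun i => by ext; simp [bipartiteAbove]; tauto
  simp only [habove, card_product, ← sq, bipartiteBelow] at hcount
  rw [hcount, ← diag_union_offDiag, sum_union (disjoint_diag_offDiag A),
    sum_congr rfl fun p hp => (by simp only [(mem_diag.1 hp).2, and_self, hρ] : _ = ρ),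
    sum_congr rfl fun p hp => hlam p.1 p.2 (mem_offDiag.1 hp).2.2,
    sum_const, sum_const, diag_card, offDiag_card, smul_eq_mul, smul_eq_mul, Nat.mul_sub_one]

theorem replication_mul_sub_one_eq [Fintype Ω] {α ρ lam : ℕ} (hα : ∀ i, #(V i) = α)
    (hρ : ∀ x, #{i | x ∈ V i} = ρ) (hlam : ∀ x y, x ≠ y → #{i | x ∈ V i ∧ y ∈ V i} = lam)
    (x : Ω) : ρ * (α - 1) = (Fintype.card Ω - 1) * lam := by
  have hcount := card_mul_eq_card_mul (s := {i | x ∈ V i}) (t := univ.erase x)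
    (fun i y => y ∈ V i) (m := α - 1) (n := lam) ?_ ?_
  · rwa [hρ, card_erase_of_mem (mem_univ x), card_univ] at hcount
  · intro i hi
    rw [bipartiteAbove, ← hα i, ← card_erase_of_mem (mem_filter.1 hi).2]
    congr 1; ext y; simp [and_comm]
  · intro y hy
    rw [bipartiteBelow, filter_filter]
    exact hlam x y (ne_of_mem_erase hy).symm

section Resolution

variable {κ : Type*} [DecidableEq κ] (cls : ι → κ)

theorem biUnion_class_eq_univ [Fintype Ω] (hcover : ∀ c x, ∃ i, cls i = c ∧ x ∈ V i) (c : κ) :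
    ({i | cls i = c} : Finset ι).biUnion V = univ :=
  eq_univ_of_forall fun x =>
    let ⟨i, hi, hx⟩ := hcover c x
    mem_biUnion.2 ⟨i, mem_filter.2 ⟨mem_univ i, hi⟩, hx⟩

theorem card_class_mul_eq_card [Fintype Ω] {α : ℕ} (hα : ∀ i, #(V i) = α)
    (hdisj : ∀ i j, i ≠ j → cls i = cls j → Disjoint (V i) (V j))
    (hcover : ∀ c x, ∃ i, cls i = c ∧ x ∈ V i) (c : κ) :
    #{i | cls i = c} * α = Fintype.card Ω := by
  rw [← card_univ, ← biUnion_class_eq_univ V cls hcover c, card_biUnion,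
    sum_const_nat fun i _ => hα i]
  intro i hi j hj hij
  exact hdisj i j hij ((mem_filter.1 hi).2.trans (mem_filter.1 hj).2.symm)

theorem sum_class_card_inter_pow (hdisj : ∀ i j, i ≠ j → cls i = cls j → Disjoint (V i) (V j))
    (i : ι) {k : ℕ} (hk : k ≠ 0) :
    ∑ j ∈ {j | cls j = cls i}, #(V i ∩ V j) ^ k = #(V i) ^ k := by
  rw [sum_eq_single_of_mem i (by simp), inter_self]
  intro j hj hji
  rw [disjoint_iff_inter_eq_empty.1 (hdisj i j hji.symm (mem_filter.1 hj).2.symm), card_empty,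
    zero_pow hk]

theorem card_add_sum_compl_class_card_inter {ρ : ℕ} (hρ : ∀ x, #{i | x ∈ V i} = ρ)
    (hdisj : ∀ i j, i ≠ j → cls i = cls j → Disjoint (V i) (V j)) (i : ι) :
    #(V i) + ∑ k ∈ {k | cls k ≠ cls i}, #(V i ∩ V k) = #(V i) * ρ := by
  have hclass := sum_class_card_inter_pow V cls hdisj i one_ne_zero
  simp only [pow_one] at hclass
  rw [← sum_card_inter_eq_card_mul V hρ, ← sum_filter_add_sum_filter_not univ
    (fun k => cls k = cls i), hclass]

theorem card_sq_add_sum_compl_class_card_inter_sq {ρ lam : ℕ} (hρ : ∀ x, #{i | x ∈ V i} = ρ)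
    (hlam : ∀ x y, x ≠ y → #{i | x ∈ V i ∧ y ∈ V i} = lam)
    (hdisj : ∀ i j, i ≠ j → cls i = cls j → Disjoint (V i) (V j)) (i : ι) :
    #(V i) ^ 2 + ∑ k ∈ {k | cls k ≠ cls i}, #(V i ∩ V k) ^ 2
      = #(V i) * ρ + #(V i) * (#(V i) - 1) * lam := by
  rw [← sum_card_inter_sq V hρ hlam, ← sum_filter_add_sum_filter_not univ
    (fun k => cls k = cls i), sum_class_card_inter_pow V cls hdisj i two_ne_zero]

end Resolution

end Design

theorem Finset.sum_sq_mul_sub {ι R : Type*} [CommRing R] (s : Finset ι) (f : ι → R) (m a : R) :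
    ∑ j ∈ s, (m * f j - a) ^ 2
      = m ^ 2 * ∑ j ∈ s, f j ^ 2 - 2 * m * a * ∑ j ∈ s, f j + #s * a ^ 2 := by
  have h : ∀ j, (m * f j - a) ^ 2 = m ^ 2 * f j ^ 2 - 2 * m * a * f j + a ^ 2 := fun j => by ring
  simp only [h, sum_add_distrib, sum_sub_distrib, ← mul_sum, sum_const, nsmul_eq_mul]

/-- The right-hand side of `Finset.sum_sq_mul_sub` for the two moments and the number of blocks
outside a parallel class, `m` being the number of blocks per class. -/
theorem affine_moment_identity {m α ρ lam : ℤ} (hρ : ρ ≠ 0) (haff : (m - 1) * ρ = m * α - 1)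
    (hfisher : ρ * (α - 1) = (m * α - 1) * lam) :
    m ^ 2 * (α * (ρ - 1) + α * (α - 1) * (lam - 1)) - 2 * m * α * (α * (ρ - 1))
      + (ρ - 1) * m * α ^ 2 = 0 := by
  have hlam : α - 1 = lam * (m - 1) :=
    mul_left_cancel₀ hρ (by linear_combination hfisher - lam * haff)
  linear_combination m * α * (1 - lam) * haff + m * α * (1 - ρ) * hlam

section Affine

variable {Ω ι κ : Type*} [Fintype Ω] [DecidableEq Ω] [Fintype ι] [Fintype κ] [DecidableEq κ]
  (V : ι → Finset Ω) (cls : ι → κ)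

theorem class_card_mul_card_inter_eq_of_affine {α ρ lam : ℕ}
    (hα : ∀ i, #(V i) = α) (hρ : ∀ x, #{i | x ∈ V i} = ρ)
    (hlam : ∀ x y, x ≠ y → #{i | x ∈ V i ∧ y ∈ V i} = lam)
    (hdisj : ∀ i j, i ≠ j → cls i = cls j → Disjoint (V i) (V j))
    (hcover : ∀ c x, ∃ i, cls i = c ∧ x ∈ V i) (hκ : Fintype.card κ = ρ)
    (haffine : Fintype.card ι + 1 = Fintype.card Ω + ρ) {i j : ι} (hij : cls i ≠ cls j) :
    #{k | cls k = cls j} * #(V i ∩ V j) = α := by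
  rcases isEmpty_or_nonempty Ω with hΩ | hΩ
  · simp [← hα i, eq_empty_of_isEmpty]
  set T : Finset ι := {k | cls k ≠ cls i}
  have hclass := card_class_mul_eq_card V cls hα hdisj hcover
  generalize hm_def : #{k | cls k = cls j} = m
  have hθ : m * α = Fintype.card Ω := hm_def ▸ hclass (cls j)
  have hαpos : 0 < α := Nat.pos_of_ne_zero fun h =>
    Fintype.card_ne_zero (α := Ω) (by simpa [h] using hθ.symm)
  have hm : ∀ c, #{k | cls k = c} = m := fun c =>
    Nat.eq_of_mul_eq_mul_right hαpos ((hclass c).trans hθ.symm)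
  have hn : Fintype.card ι = ρ * m := by
    rw [← card_univ, card_eq_sum_card_fiberwise (f := cls) (t := univ) fun _ _ => mem_univ _]
    simp [hm, hκ]
  have hT : m + #T = ρ * m := by
    rw [← hm (cls i), card_filter_add_card_filter_not, card_univ, hn, hm]
  have hρ0 : (ρ : ℤ) ≠ 0 := by
    rw [← hκ]; exact_mod_cast (Fintype.card_pos_iff.2 ⟨cls i⟩).ne'
  have haffine' : ((m : ℤ) - 1) * ρ = m * α - 1 := by
    have := congrArg (Nat.cast : ℕ → ℤ) haffine
    push_cast [hn, ← hθ] at this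
    linear_combination this
  have hfisher : (ρ : ℤ) * (α - 1) = (m * α - 1) * lam := by
    have hθpos : 1 ≤ m * α := hθ ▸ Fintype.card_pos
    have := congrArg (Nat.cast : ℕ → ℤ) (hθ ▸ replication_mul_sub_one_eq V hα hρ hlam hΩ.some)
    push_cast [Nat.cast_sub hαpos, Nat.cast_sub hθpos] at this
    linear_combination this
  have hzero : ∑ k ∈ T, ((m : ℤ) * #(V i ∩ V k) - α) ^ 2 = 0 := by
    have h1 := congrArg (Nat.cast : ℕ → ℤ) (card_add_sum_compl_class_card_inter V cls hρ hdisj i)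
    have h2 := congrArg (Nat.cast : ℕ → ℤ)
      (card_sq_add_sum_compl_class_card_inter_sq V cls hρ hlam hdisj i)
    have hT' := congrArg (Nat.cast : ℕ → ℤ) hT
    rw [hα i] at h1 h2
    push_cast [Nat.cast_sub hαpos] at h1 h2 hT'
    rw [sum_sq_mul_sub, (by linear_combination h1 : ∑ k ∈ T, (#(V i ∩ V k) : ℤ) = α * (ρ - 1)),
      (by linear_combination h2 : ∑ k ∈ T, (#(V i ∩ V k) : ℤ) ^ 2
        = α * (ρ - 1) + α * (α - 1) * (lam - 1)),
      (by linear_combination hT' : (#T : ℤ) = (ρ - 1) * m)]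
    exact affine_moment_identity hρ0 haffine' hfisher
  have hjT : j ∈ T := mem_filter.2 ⟨mem_univ j, hij.symm⟩
  have hsq := (sum_eq_zero_iff_of_nonneg fun k _ => sq_nonneg _).1 hzero j hjT
  exact_mod_cast sub_eq_zero.1 (pow_eq_zero_iff two_ne_zero |>.1 hsq)

end Affine

/-- In an affine resolvable `(θ, ρ, α, λ)`-BIBD, with `β = α²/θ`: for two distinct
parallel classes `c₁ ≠ c₂` and a block `V i` in class `c₁`, the class `c₂` contains
exactly `θ/α` blocks, `|V i ∩ V j| = β` for every block `V j` of class `c₂`, and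
`V i` is the union of the sets `V i ∩ V j` over blocks `V j` of class `c₂`;
in particular `V i` is `β`-recoverable from the class `c₂`. -/
theorem affine_resolvable_beta_recoverable {Ω : Type*} [Fintype Ω] [DecidableEq Ω]
    (θ n α ρ lam β : ℕ)
    (hθ : Fintype.card Ω = θ)
    (V : Fin n → Finset Ω)
    (hα : ∀ i, (V i).card = α)
    (hρ : ∀ x : Ω, (Finset.univ.filter fun i => x ∈ V i).card = ρ)
    (hlam : ∀ x y : Ω, x ≠ y →
      (Finset.univ.filter fun i => x ∈ V i ∧ y ∈ V i).card = lam)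
    (cls : Fin n → Fin ρ)
    (hdisj : ∀ i j, i ≠ j → cls i = cls j → Disjoint (V i) (V j))
    (hcover : ∀ (c : Fin ρ) (x : Ω), ∃ i, cls i = c ∧ x ∈ V i)
    (haffine : n = θ + ρ - 1)
    (hβ : β = α ^ 2 / θ)
    (c₁ c₂ : Fin ρ) (hc : c₁ ≠ c₂)
    (i : Fin n) (hi : cls i = c₁) :
    (Finset.univ.filter fun j => cls j = c₂).card * α = θ ∧
    (∀ j, cls j = c₂ → (V i ∩ V j).card = β) ∧
    V i = (Finset.univ.filter fun j => cls j = c₂).biUnion (fun j => V i ∩ V j) := by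
  have hsize : #{j | cls j = c₂} * α = θ := hθ ▸ card_class_mul_eq_card V cls hα hdisj hcover c₂
  refine ⟨hsize, fun j hj => ?_, ?_⟩
  · have hcard : Fintype.card (Fin n) + 1 = Fintype.card Ω + ρ := by
      rw [Fintype.card_fin, hθ, haffine]; have := c₁.pos; omega
    have hkey := class_card_mul_card_inter_eq_of_affine V cls hα hρ hlam hdisj hcover
      (Fintype.card_fin ρ) hcard (hi.trans_ne (hc.trans_eq hj.symm))
    rw [hj] at hkey
    have hsq : α ^ 2 = #(V i ∩ V j) * θ := by rw [← hsize, ← hkey]; ring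
    rcases θ.eq_zero_or_pos with hθ0 | hθpos
    · rw [hβ, hθ0, Nat.div_zero]
      exact Nat.eq_zero_of_le_zero ((card_le_univ _).trans_eq (hθ.trans hθ0))
    · rw [hβ, hsq, Nat.mul_div_cancel _ hθpos]
  · rw [← inter_biUnion, biUnion_class_eq_univ V cls hcover, inter_univ]
end

section
/- Let q = 4m − 1 be an odd prime power (so q ≡ 3 mod 4) and let D = {z² : z ∈ 𝔽_q, z ≠ 0} be the set of nonzero quadratic residues of 𝔽_q. Then |D| = 2m − 1, and for every nonzero g ∈ 𝔽_q the number of ordered pairs (d₁, d₂) ∈ D × D with d₁ − d₂ = g equals m − 1. That is, D is a (4m−1, 2m−1, m−1)-difference set in (𝔽_q, +). -/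
/-!
Squaring is two-to-one on `𝔽_qˣ`, so `2 |D| = q - 1`, and `(x, y) ↦ (x², y²)` is four-to-one from
the points of the hyperbola `x² - y² = g` off the axes onto the representations `g = d₁ - d₂`.
The substitution `u = x + y`, `v = x - y` turns the hyperbola into `u v = g`, which has `q - 1`
points. As `-1` is a nonsquare when `q ≡ 3 mod 4`, exactly one of `g`, `-g` is a square, so exactly
two points of `x² - y² = g` lie on the axes, and the number of representations is `(q - 3) / 4 = m - 1`.
-/

open Finset

theorem Finset.card_eq_mul_card_image {ι M : Type*} [DecidableEq M]
    {s : Finset ι} {f : ι → M} {k : ℕ} (h : ∀ b ∈ s.image f, #{a ∈ s | f a = b} = k) :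
    #s = k * #(s.image f) := by
  rw [card_eq_sum_card_image f s, sum_congr rfl h, sum_const, smul_eq_mul, mul_comm]

namespace FiniteField

variable {F : Type*} [Field F] [Fintype F] [DecidableEq F]

theorem card_sqrts (hF : ringChar F ≠ 2) (a : F) :
    (#{x : F | x ^ 2 = a} : ℤ) = quadraticChar F a + 1 := by
  simpa only [Set.toFinset_ofPred] using quadraticChar_card_sqrts hF a

theorem card_sqrts_sq (hF : ringChar F ≠ 2) {b : F} (hb : b ≠ 0) :
    #{x : F | x ^ 2 = b ^ 2} = 2 := by
  have h := card_sqrts hF (b ^ 2)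
  rw [quadraticChar_sq_one' hb] at h
  omega

theorem card_sqrts_add_card_sqrts_neg (hF : ringChar F ≠ 2) (hneg : ¬IsSquare (-1 : F)) (g : F) :
    #{x : F | x ^ 2 = g} + #{x : F | x ^ 2 = -g} = 2 := by
  have hχ : quadraticChar F (-g) = -quadraticChar F g := by
    rw [neg_eq_neg_one_mul, map_mul, quadraticChar_neg_one_iff_not_isSquare.mpr hneg, neg_one_mul]
  have h₁ := card_sqrts hF g
  have h₂ := card_sqrts hF (-g)
  omega

theorem card_ne_zero : #{z : F | z ≠ 0} = Fintype.card F - 1 := by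
  rw [filter_ne', card_erase_of_mem (mem_univ _), card_univ]

theorem card_mul_eq {g : F} (hg : g ≠ 0) :
    #{p : F × F | p.1 * p.2 = g} = Fintype.card F - 1 := by
  have hfst : ∀ p : F × F, p.1 * p.2 = g → p.1 ≠ 0 := by
    rintro ⟨u, v⟩ huv rfl
    exact hg (by simpa using huv.symm)
  rw [← card_ne_zero]
  refine card_nbij' Prod.fst (fun u => (u, g / u)) ?_ ?_ ?_ ?_
  · intro p hp
    simpa using hfst p (by simpa using hp)
  · intro u hu
    simp_all [mul_div_cancel₀]
  · rintro ⟨u, v⟩ huv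
    have huv : u * v = g := by simpa using huv
    simp [← huv, mul_div_cancel_left₀ v (hfst (u, v) huv)]
  · intro u _; rfl

theorem card_sq_sub_sq_eq (hF : ringChar F ≠ 2) {g : F} (hg : g ≠ 0) :
    #{p : F × F | p.1 ^ 2 - p.2 ^ 2 = g} = Fintype.card F - 1 := by
  have h2 : (2 : F) ≠ 0 := Ring.two_ne_zero hF
  rw [← card_mul_eq hg]
  refine card_nbij' (fun p => (p.1 + p.2, p.1 - p.2))
    (fun p => ((p.1 + p.2) / 2, (p.1 - p.2) / 2)) ?_ ?_ ?_ ?_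
  · rintro ⟨x, y⟩ h
    simp only [coe_filter, mem_univ, true_and, Set.mem_ofPred_eq] at h ⊢
    linear_combination h
  · rintro ⟨u, v⟩ h
    simp only [coe_filter, mem_univ, true_and, Set.mem_ofPred_eq] at h ⊢
    field_simp
    linear_combination 4 * h
  · rintro ⟨x, y⟩ -
    ext <;> field_simp <;> ring
  · rintro ⟨u, v⟩ -
    ext <;> field_simp <;> ring

theorem card_sq_sub_sq_eq_off_axes (hF : ringChar F ≠ 2) (hneg : ¬IsSquare (-1 : F)) {g : F}
    (hg : g ≠ 0) :
    #{p : F × F | p.1 ≠ 0 ∧ p.2 ≠ 0 ∧ p.1 ^ 2 - p.2 ^ 2 = g} + 2 = Fintype.card F - 1 := by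
  set H : Finset (F × F) := {p | p.1 ^ 2 - p.2 ^ 2 = g}
  have hT : ({p : F × F | p.1 ≠ 0 ∧ p.2 ≠ 0 ∧ p.1 ^ 2 - p.2 ^ 2 = g} : Finset _)
      = {p ∈ H | p.1 ≠ 0 ∧ p.2 ≠ 0} := by
    ext
    simp only [H, mem_filter, mem_univ, true_and]
    tauto
  have haxes : {p ∈ H | ¬(p.1 ≠ 0 ∧ p.2 ≠ 0)}
      = ({x | x ^ 2 = g} : Finset F).image (·, 0) ∪ ({y | y ^ 2 = -g} : Finset F).image (0, ·) := by
    ext ⟨x, y⟩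
    simp only [H, mem_filter, mem_univ, true_and, mem_union, mem_image, Prod.mk.injEq,
      not_and_or, not_not]
    constructor
    · rintro ⟨hxy, rfl | rfl⟩
      · exact Or.inr ⟨y, by linear_combination -hxy, rfl, rfl⟩
      · exact Or.inl ⟨x, by linear_combination hxy, rfl, rfl⟩
    · rintro (⟨x, hx, rfl, rfl⟩ | ⟨y, hy, rfl, rfl⟩)
      · exact ⟨by linear_combination hx, Or.inr rfl⟩
      · exact ⟨by linear_combination -hy, Or.inl rfl⟩
  have hdisj : Disjoint (({x | x ^ 2 = g} : Finset F).image (·, 0))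
      (({y | y ^ 2 = -g} : Finset F).image (0, ·)) := by
    simp only [disjoint_left, mem_image, mem_filter, mem_univ, true_and, not_exists, not_and]
    rintro _ ⟨x, hx, rfl⟩ y - hyx
    obtain ⟨rfl, -⟩ := Prod.mk.inj hyx
    exact hg (by simpa using hx.symm)
  rw [← card_sq_sub_sq_eq hF hg, ← card_filter_add_card_filter_not (s := H)
    (fun p => p.1 ≠ 0 ∧ p.2 ≠ 0), hT, haxes, card_union_of_disjoint hdisj,
    card_image_of_injective _ (Prod.mk_left_injective 0),
    card_image_of_injective _ (Prod.mk_right_injective 0), card_sqrts_add_card_sqrts_neg hF hneg]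

def nonzeroSquares (F : Type*) [Field F] [Fintype F] [DecidableEq F] : Finset F :=
  ({z : F | z ≠ 0} : Finset F).image (· ^ 2)

theorem two_mul_card_nonzeroSquares (hF : ringChar F ≠ 2) :
    2 * #(nonzeroSquares F) = Fintype.card F - 1 := by
  rw [← card_ne_zero, card_eq_mul_card_image (s := {z : F | z ≠ 0}) (f := (· ^ 2)) (k := 2)]
  · rfl
  simp only [mem_image, forall_exists_index, and_imp]
  rintro _ z hz rfl
  have hz : z ≠ 0 := by simpa using hz
  rw [filter_filter, filter_congr (q := fun a => a ^ 2 = z ^ 2), card_sqrts_sq hF hz]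
  intro a _
  exact and_iff_right_of_imp fun ha h0 => hz (by simpa [h0] using ha.symm)

theorem four_mul_card_nonzeroSquares_sub_eq (hF : ringChar F ≠ 2) (g : F) :
    4 * #{p ∈ nonzeroSquares F ×ˢ nonzeroSquares F | p.1 - p.2 = g}
      = #{p : F × F | p.1 ≠ 0 ∧ p.2 ≠ 0 ∧ p.1 ^ 2 - p.2 ^ 2 = g} := by
  set N : Finset F := {z | z ≠ 0}
  set T : Finset (F × F) := {p ∈ N ×ˢ N | p.1 ^ 2 - p.2 ^ 2 = g}
  set sq : F × F → F × F := Prod.map (· ^ 2) (· ^ 2)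
  have hT : ({p : F × F | p.1 ≠ 0 ∧ p.2 ≠ 0 ∧ p.1 ^ 2 - p.2 ^ 2 = g} : Finset _) = T := by
    ext
    simp [T, N, and_assoc]
  have hS : {p ∈ nonzeroSquares F ×ˢ nonzeroSquares F | p.1 - p.2 = g} = T.image sq := by
    rw [nonzeroSquares, ← prodMap_image_product, filter_image]
    rfl
  rw [hT, hS, card_eq_mul_card_image (s := T) (f := sq) (k := 4)]
  rintro _ hb
  obtain ⟨⟨x, y⟩, hxy, rfl⟩ := mem_image.1 hb
  simp only [T, N, mem_filter, mem_product, mem_univ, true_and] at hxy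
  obtain ⟨⟨hx, hy⟩, hxy⟩ := hxy
  have hfiber : {p ∈ T | sq p = sq (x, y)}
      = ({a | a ^ 2 = x ^ 2} : Finset F) ×ˢ ({b | b ^ 2 = y ^ 2} : Finset F) := by
    ext ⟨a, b⟩
    simp only [T, N, sq, mem_filter, mem_product, mem_univ, true_and, Prod.map, Prod.mk.injEq]
    constructor
    · exact fun h => h.2
    · rintro ⟨ha, hb⟩
      refine ⟨⟨⟨?_, ?_⟩, by rw [ha, hb, hxy]⟩, ha, hb⟩
      · rintro rfl; exact hx (by simpa using ha.symm)
      · rintro rfl; exact hy (by simpa using hb.symm)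
  rw [hfiber, card_product, card_sqrts_sq hF hx, card_sqrts_sq hF hy]

end FiniteField

theorem quadratic_residue_difference_set_general {F : Type*} [Field F] [Fintype F]
    [DecidableEq F]
    (m : ℕ) (hq : Fintype.card F = 4 * m - 1)
    (D : Finset F)
    (hD : D = (Finset.univ.filter fun z : F => z ≠ 0).image (fun z => z ^ 2)) :
    D.card = 2 * m - 1 ∧
    ∀ g : F, g ≠ 0 →
      ((D ×ˢ D).filter fun p : F × F => p.1 - p.2 = g).card = m - 1 := by
  obtain rfl : D = FiniteField.nonzeroSquares F := hD
  have hpos : 0 < Fintype.card F := Fintype.card_pos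
  have hF : ringChar F ≠ 2 := fun h => by
    have := FiniteField.even_card_of_char_two h
    omega
  have hneg : ¬IsSquare (-1 : F) := by
    rw [FiniteField.isSquare_neg_one_iff]
    omega
  refine ⟨?_, fun g hg => ?_⟩
  · have := FiniteField.two_mul_card_nonzeroSquares hF
    omega
  · have h₁ := FiniteField.four_mul_card_nonzeroSquares_sub_eq hF g
    have h₂ := FiniteField.card_sq_sub_sq_eq_off_axes hF hneg hg
    omega

/-- Quadratic residue difference set: if `𝔽_q` is the finite field with
`q = 4m − 1` elements (an odd prime power), then the set `D` of nonzero squares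
has `|D| = 2m − 1` and every nonzero `g` can be written as `d₁ − d₂` with
`d₁, d₂ ∈ D` in exactly `m − 1` ways; i.e. `D` is a
`(4m−1, 2m−1, m−1)`-difference set in `(𝔽_q, +)`. -/
theorem quadratic_residue_difference_set {F : Type*} [Field F] [Fintype F]
    [DecidableEq F]
    (m : ℕ) (hm : 1 ≤ m) (hq : Fintype.card F = 4 * m - 1)
    (D : Finset F)
    (hD : D = (Finset.univ.filter fun z : F => z ≠ 0).image (fun z => z ^ 2)) :
    D.card = 2 * m - 1 ∧
    ∀ g : F, g ≠ 0 →
      ((D ×ˢ D).filter fun p : F × F => p.1 - p.2 = g).card = m - 1 :=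
  quadratic_residue_difference_set_general m hq D hD
end

section
/- Let s ≥ 1, r ≥ 2, and let L₁, …, L_{r−2} be mutually orthogonal Latin squares of order s on the symbol set {1, …, s}. On the point set Ω = {1,…,s} × {1,…,s} of size s², consider the r·s blocks: the s rows R_i = {(i, j) : 1 ≤ j ≤ s}, the s columns C_j = {(i, j) : 1 ≤ i ≤ s}, and for each t ∈ {1,…,r−2} and each z ∈ {1,…,s} the level set S_{t,z} = {(i,j) : L_t(i,j) = z}. Then every block has cardinality s; the rows form a parallel class, the columns form a parallel class, and for each fixed t the level sets {S_{t,z} : z} form a parallel class, so every point lies in exactly r blocks; and any two blocks belonging to different parallel classes intersect in exactly one point. Hence this family is a resolvable fractional repetition code with θ = s², n = rs, α = s, ρ = r and β = 1. -/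
/-!
Write `Ω = [s] × [s]` and attach to every parallel class a coordinate `Ω → [s]`: the row index,
the column index, and `(i, j) ↦ L_t(i, j)`. Each block is a level set of the coordinate of its
class, and any two distinct coordinates are orthogonal, i.e. jointly a bijection `Ω ≃ [s] × [s]`
(for a row or column paired with a Latin square this is the Latin property, for two squares it
is their orthogonality). All the claims are then statements about level sets of pairwise
orthogonal maps: two level sets of orthogonal maps meet in one point, a level set is in
bijection with `[s]` through any coordinate orthogonal to its own, and the level sets of one map
partition `Ω`.
-/

open Finset

def OrthogonalMaps {Ω α β : Type*} (f : Ω → α) (g : Ω → β) : Prop :=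
  Function.Bijective fun p => (f p, g p)

namespace OrthogonalMaps

variable {Ω α β : Type*} {f : Ω → α} {g : Ω → β}

theorem symm (h : OrthogonalMaps f g) : OrthogonalMaps g f :=
  (Equiv.prodComm α β).bijective.comp h

theorem of_existsUnique (h : ∀ x y, ∃! p, f p = x ∧ g p = y) : OrthogonalMaps f g :=
  (Function.bijective_iff_existsUnique _).2 fun q => by simpa [Prod.ext_iff] using h q.1 q.2

variable [Fintype Ω] [DecidableEq α] [DecidableEq β]

theorem card_filter_and_eq (h : OrthogonalMaps f g) (x : α) (y : β) :
    #{p | f p = x ∧ g p = y} = 1 := by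
  obtain ⟨p₀, hp₀, hu⟩ := (Function.bijective_iff_existsUnique _).1 h (x, y)
  refine card_eq_one.2 ⟨p₀, ?_⟩
  ext p
  simp only [mem_filter, mem_univ, true_and, mem_singleton]
  exact ⟨fun hp => hu p (Prod.ext hp.1 hp.2), fun hp => hp ▸ Prod.ext_iff.1 hp₀⟩

theorem card_filter_eq [Fintype β] (h : OrthogonalMaps f g) (x : α) :
    #{p | f p = x} = Fintype.card β := by
  calc #{p | f p = x} = ∑ y, #{p | f p = x ∧ g p = y} := by
        rw [card_eq_sum_card_fiberwise fun p _ => mem_univ (g p)]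
        simp only [filter_filter]
    _ = Fintype.card β := by simp [h.card_filter_and_eq]

end OrthogonalMaps

section LevelBlocks

variable {Ω α β γ : Type*} [Fintype Ω] [DecidableEq α]

def levelBlock (f : γ → Ω → α) (cls : β → γ) (val : β → α) (b : β) : Finset Ω :=
  {p | f (cls b) p = val b}

variable {f : γ → Ω → α} {cls : β → γ} {val : β → α}

@[simp]
theorem mem_levelBlock {b : β} {p : Ω} : p ∈ levelBlock f cls val b ↔ f (cls b) p = val b := by
  simp [levelBlock]

theorem card_levelBlock [Fintype α] [Nontrivial γ]
    (horth : Pairwise fun c c' => OrthogonalMaps (f c) (f c')) (b : β) :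
    #(levelBlock f cls val b) = Fintype.card α := by
  obtain ⟨c, hc⟩ := exists_ne (cls b)
  exact (horth hc.symm).card_filter_eq _

theorem card_inter_levelBlock [DecidableEq Ω]
    (horth : Pairwise fun c c' => OrthogonalMaps (f c) (f c')) {b₁ b₂ : β} (h : cls b₁ ≠ cls b₂) :
    #(levelBlock f cls val b₁ ∩ levelBlock f cls val b₂) = 1 := by
  rw [levelBlock, levelBlock, ← filter_and]
  exact (horth h).card_filter_and_eq _ _

theorem disjoint_levelBlock (hinj : Function.Injective fun b => (cls b, val b)) {b₁ b₂ : β}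
    (hcls : cls b₁ = cls b₂) (hne : b₁ ≠ b₂) :
    Disjoint (levelBlock f cls val b₁) (levelBlock f cls val b₂) := by
  have hval : val b₁ ≠ val b₂ := fun hval => hne (hinj (Prod.ext hcls hval))
  refine disjoint_left.2 fun p hp₁ hp₂ => hval ?_
  rw [mem_levelBlock] at hp₁ hp₂
  rw [← hp₁, ← hp₂, hcls]

theorem exists_mem_levelBlock (hsurj : Function.Surjective fun b => (cls b, val b)) (c : γ)
    (p : Ω) : ∃ b, cls b = c ∧ p ∈ levelBlock f cls val b := by
  obtain ⟨b, hb⟩ := hsurj (c, f c p)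
  obtain ⟨hcls, hval⟩ := Prod.ext_iff.1 hb
  exact ⟨b, hcls, by simp_all⟩

theorem card_filter_mem_levelBlock [DecidableEq Ω] [Fintype β] [Fintype γ]
    (hbij : Function.Bijective fun b => (cls b, val b)) (p : Ω) :
    #{b | p ∈ levelBlock f cls val b} = Fintype.card γ := by
  rw [← card_univ]
  refine card_bij (fun b _ => cls b) (fun _ _ => mem_univ _) ?_ ?_
  · intro b₁ hb₁ b₂ hb₂ hcls
    simp only [mem_filter, mem_univ, true_and, mem_levelBlock] at hb₁ hb₂
    exact hbij.1 (Prod.ext hcls (show val b₁ = val b₂ by rw [← hb₁, ← hb₂, hcls]))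
  · intro c _
    obtain ⟨b, hb, hp⟩ := exists_mem_levelBlock hbij.2 c p
    exact ⟨b, by simpa using hp, hb⟩

end LevelBlocks

section LatinSquares

variable {ι κ σ : Type*}

theorem orthogonalMaps_fst_snd : OrthogonalMaps (Prod.fst : ι × κ → ι) Prod.snd :=
  Function.bijective_id

theorem orthogonalMaps_fst_of_bijective_row {M : ι → κ → σ}
    (hM : ∀ i, Function.Bijective (M i)) : OrthogonalMaps Prod.fst fun p : ι × κ => M p.1 p.2 := by
  refine ⟨fun ⟨i, j⟩ ⟨i', j'⟩ h => ?_, fun y => ?_⟩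
  · obtain ⟨rfl, hj⟩ := Prod.mk.inj h
    exact congrArg _ ((hM i).1 hj)
  · obtain ⟨j, hj⟩ := (hM y.1).2 y.2
    exact ⟨(y.1, j), Prod.ext rfl hj⟩

theorem orthogonalMaps_snd_of_bijective_col {M : ι → κ → σ}
    (hM : ∀ j, Function.Bijective fun i => M i j) :
    OrthogonalMaps Prod.snd fun p : ι × κ => M p.1 p.2 :=
  (orthogonalMaps_fst_of_bijective_row (M := fun j i => M i j) hM).comp
    (Equiv.prodComm ι κ).bijective

variable {s k : ℕ}

def gridCoord (L : Fin k → Fin s → Fin s → Fin s) : Unit ⊕ Unit ⊕ Fin k → Fin s × Fin s → Fin s :=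
  Sum.elim (fun _ p => p.1) (Sum.elim (fun _ p => p.2) fun t p => L t p.1 p.2)

def blockClass : Fin s ⊕ Fin s ⊕ Fin k × Fin s → Unit ⊕ Unit ⊕ Fin k :=
  Sum.elim (fun _ => Sum.inl ())
    (Sum.elim (fun _ => Sum.inr (Sum.inl ())) fun tz => Sum.inr (Sum.inr tz.1))

def blockSymbol : Fin s ⊕ Fin s ⊕ Fin k × Fin s → Fin s :=
  Sum.elim id (Sum.elim id Prod.snd)

theorem bijective_blockClass_blockSymbol :
    Function.Bijective fun b : Fin s ⊕ Fin s ⊕ Fin k × Fin s => (blockClass b, blockSymbol b) := by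
  refine ⟨?_, ?_⟩
  · rintro (i | j | ⟨t, z⟩) (i' | j' | ⟨t', z'⟩) h <;> simp_all [blockClass, blockSymbol]
  · rintro ⟨_ | _ | t, z⟩
    exacts [⟨Sum.inl z, rfl⟩, ⟨Sum.inr (Sum.inl z), rfl⟩, ⟨Sum.inr (Sum.inr (t, z)), rfl⟩]

theorem pairwise_orthogonalMaps_gridCoord {L : Fin k → Fin s → Fin s → Fin s}
    (hLrow : ∀ t i, Function.Bijective (L t i))
    (hLcol : ∀ t j, Function.Bijective (fun i => L t i j))
    (horth : ∀ t₁ t₂, t₁ ≠ t₂ → ∀ x y : Fin s,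
      ∃! p : Fin s × Fin s, L t₁ p.1 p.2 = x ∧ L t₂ p.1 p.2 = y) :
    Pairwise fun c c' => OrthogonalMaps (gridCoord L c) (gridCoord L c') := by
  have row_col : OrthogonalMaps (gridCoord L (.inl ())) (gridCoord L (.inr (.inl ()))) :=
    orthogonalMaps_fst_snd
  have row_lat (t) : OrthogonalMaps (gridCoord L (.inl ())) (gridCoord L (.inr (.inr t))) :=
    orthogonalMaps_fst_of_bijective_row (hLrow t)
  have col_lat (t) : OrthogonalMaps (gridCoord L (.inr (.inl ()))) (gridCoord L (.inr (.inr t))) :=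
    orthogonalMaps_snd_of_bijective_col (hLcol t)
  rintro (_ | _ | t) (_ | _ | t') h
  · exact absurd rfl h
  · exact row_col
  · exact row_lat t'
  · exact row_col.symm
  · exact absurd rfl h
  · exact col_lat t'
  · exact (row_lat t).symm
  · exact (col_lat t).symm
  · exact OrthogonalMaps.of_existsUnique (horth t t' fun h' => h (h' ▸ rfl))

end LatinSquares

theorem mols_resolvable_fr_code_general (s r : ℕ) (hr : 2 ≤ r)
    (L : Fin (r - 2) → Fin s → Fin s → Fin s)
    (hLrow : ∀ t i, Function.Bijective (L t i))
    (hLcol : ∀ t j, Function.Bijective (fun i => L t i j))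
    (horth : ∀ t₁ t₂, t₁ ≠ t₂ → ∀ x y : Fin s,
      ∃! p : Fin s × Fin s, L t₁ p.1 p.2 = x ∧ L t₂ p.1 p.2 = y)
    (V : (Fin s ⊕ Fin s ⊕ Fin (r - 2) × Fin s) → Finset (Fin s × Fin s))
    (hVrow : ∀ i : Fin s, V (Sum.inl i) =
      Finset.univ.filter fun p : Fin s × Fin s => p.1 = i)
    (hVcol : ∀ j : Fin s, V (Sum.inr (Sum.inl j)) =
      Finset.univ.filter fun p : Fin s × Fin s => p.2 = j)
    (hVlat : ∀ (t : Fin (r - 2)) (z : Fin s), V (Sum.inr (Sum.inr (t, z))) =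
      Finset.univ.filter fun p : Fin s × Fin s => L t p.1 p.2 = z)
    (cls : (Fin s ⊕ Fin s ⊕ Fin (r - 2) × Fin s) → (Unit ⊕ Unit ⊕ Fin (r - 2)))
    (hcls : cls = Sum.elim (fun _ => Sum.inl ())
      (Sum.elim (fun _ => Sum.inr (Sum.inl ())) (fun tz => Sum.inr (Sum.inr tz.1)))) :
    (∀ b, (V b).card = s) ∧
    (∀ c, (∀ b₁ b₂, cls b₁ = c → cls b₂ = c → b₁ ≠ b₂ → Disjoint (V b₁) (V b₂)) ∧
      (∀ p : Fin s × Fin s, ∃ b, cls b = c ∧ p ∈ V b)) ∧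
    (∀ p : Fin s × Fin s, (Finset.univ.filter fun b => p ∈ V b).card = r) ∧
    (∀ b₁ b₂, cls b₁ ≠ cls b₂ → (V b₁ ∩ V b₂).card = 1) ∧
    Fintype.card (Fin s × Fin s) = s ^ 2 ∧
    Fintype.card (Fin s ⊕ Fin s ⊕ Fin (r - 2) × Fin s) = r * s := by
  have hV : V = levelBlock (gridCoord L) blockClass blockSymbol := by
    funext b
    ext p
    rcases b with i | j | ⟨t, z⟩ <;>
      simp [hVrow, hVcol, hVlat, gridCoord, blockClass, blockSymbol]
  subst hV hcls
  have horth' := pairwise_orthogonalMaps_gridCoord hLrow hLcol horth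
  have : Nontrivial (Unit ⊕ Unit ⊕ Fin (r - 2)) :=
    nontrivial_of_ne (.inl ()) (.inr (.inl ())) Sum.inl_ne_inr
  have hbij := bijective_blockClass_blockSymbol (s := s) (k := r - 2)
  refine ⟨fun b => ?_, fun c => ⟨fun b₁ b₂ h₁ h₂ => disjoint_levelBlock hbij.1 (h₁.trans h₂.symm),
      exists_mem_levelBlock hbij.2 c⟩, fun p => ?_,
    fun b₁ b₂ h => card_inter_levelBlock horth' h, by simp [sq], ?_⟩
  · rw [card_levelBlock horth', Fintype.card_fin]
  · rw [card_filter_mem_levelBlock hbij]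
    simp only [Fintype.card_sum, Fintype.card_unit, Fintype.card_fin]
    omega
  · simp only [Fintype.card_sum, Fintype.card_prod, Fintype.card_fin]
    rw [← add_assoc, ← two_mul, ← add_mul, Nat.add_sub_cancel' hr]

/-- From `r − 2` mutually orthogonal Latin squares of order `s` one obtains, on
the point set `[s] × [s]`, the `r·s` blocks given by the `s` rows, the `s`
columns, and the level sets of each Latin square.  Every block has `s` points;
the rows, the columns, and the level sets of each fixed Latin square each form a
parallel class (so every point lies in exactly `r` blocks); and any two blocks
from different parallel classes meet in exactly one point.  Hence this family is
a resolvable fractional repetition code with `θ = s²`, `n = rs`, `α = s`,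
`ρ = r` and `β = 1`. -/
theorem mols_resolvable_fr_code (s r : ℕ) (hs : 1 ≤ s) (hr : 2 ≤ r)
    (L : Fin (r - 2) → Fin s → Fin s → Fin s)
    (hLrow : ∀ t i, Function.Bijective (L t i))
    (hLcol : ∀ t j, Function.Bijective (fun i => L t i j))
    (horth : ∀ t₁ t₂, t₁ ≠ t₂ → ∀ x y : Fin s,
      ∃! p : Fin s × Fin s, L t₁ p.1 p.2 = x ∧ L t₂ p.1 p.2 = y)
    (V : (Fin s ⊕ Fin s ⊕ Fin (r - 2) × Fin s) → Finset (Fin s × Fin s))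
    (hVrow : ∀ i : Fin s, V (Sum.inl i) =
      Finset.univ.filter fun p : Fin s × Fin s => p.1 = i)
    (hVcol : ∀ j : Fin s, V (Sum.inr (Sum.inl j)) =
      Finset.univ.filter fun p : Fin s × Fin s => p.2 = j)
    (hVlat : ∀ (t : Fin (r - 2)) (z : Fin s), V (Sum.inr (Sum.inr (t, z))) =
      Finset.univ.filter fun p : Fin s × Fin s => L t p.1 p.2 = z)
    (cls : (Fin s ⊕ Fin s ⊕ Fin (r - 2) × Fin s) → (Unit ⊕ Unit ⊕ Fin (r - 2)))
    (hcls : cls = Sum.elim (fun _ => Sum.inl ())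
      (Sum.elim (fun _ => Sum.inr (Sum.inl ())) (fun tz => Sum.inr (Sum.inr tz.1)))) :
    (∀ b, (V b).card = s) ∧
    (∀ c, (∀ b₁ b₂, cls b₁ = c → cls b₂ = c → b₁ ≠ b₂ → Disjoint (V b₁) (V b₂)) ∧
      (∀ p : Fin s × Fin s, ∃ b, cls b = c ∧ p ∈ V b)) ∧
    (∀ p : Fin s × Fin s, (Finset.univ.filter fun b => p ∈ V b).card = r) ∧
    (∀ b₁ b₂, cls b₁ ≠ cls b₂ → (V b₁ ∩ V b₂).card = 1) ∧
    Fintype.card (Fin s × Fin s) = s ^ 2 ∧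
    Fintype.card (Fin s ⊕ Fin s ⊕ Fin (r - 2) × Fin s) = r * s :=
  mols_resolvable_fr_code_general s r hr L hLrow hLcol horth V hVrow hVcol hVlat cls hcls
end
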